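/- Let T, S be bounded linear operators on H admitting A-adjoints T♯, S♯ respectively. Then w_A(T∘S ± S∘T) ≤ 2√2 · ‖S‖_A · √( w_A(T)² − | ‖Re_A(T) + Im_A(T)‖_A² − ‖Re_A(T) − Im_A(T)‖_A² | / 4 ), for both choices of sign. -/

import Mathlib

/-!
For `‖x‖_A = 1`, moving `T` and `S` across the `A`-inner product gives
`|⟨TSx, x⟩_A| + |⟨STx, x⟩_A| ≤ ‖S‖_A (‖Tx‖_A + ‖T♯x‖_A)`. With `P = Re_A T + Im_A T` and
`Q = Re_A T - Im_A T`, the parallelogram law gives `‖Tx‖_A² + ‖T♯x‖_A² = ‖Px‖_A² + ‖Qx‖_A²`.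
Since `P` and `Q` are `A`-selfadjoint, `‖P‖_A ≤ w_A(P) ≤ √2 w_A(T)` and likewise for `Q`, so
`‖P‖_A² + ‖Q‖_A² = 2 max(‖P‖_A², ‖Q‖_A²) - |‖P‖_A² - ‖Q‖_A²| ≤ 4 w_A(T)² - |‖P‖_A² - ‖Q‖_A²|`,
and `(a + b)² ≤ 2 (a² + b²)` concludes.

The suprema defining `‖·‖_A` and `w_A` are finite because an operator with an `A`-adjoint is
`A`-bounded: for `A`-selfadjoint `R` and `‖x‖_A = 1`, iterating Cauchy–Schwarz gives
`‖Rx‖_A ^ 2ⁿ ≤ ‖R ^ 2ⁿ x‖_A ≤ √‖A‖ ‖R‖ ^ 2ⁿ ‖x‖`, hence `‖Rx‖_A ≤ ‖R‖`.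
-/

noncomputable section

open Complex ContinuousLinearMap

variable {H : Type*} [NormedAddCommGroup H] [InnerProductSpace ℂ H] [CompleteSpace H]

/-- The `A`-inner product `⟨x, y⟩_A = ⟨A x, y⟩`. -/
def innA (A : H →L[ℂ] H) (x y : H) : ℂ := @inner ℂ _ _ (A x) y

/-- The `A`-seminorm `‖x‖_A = √⟨A x, x⟩`. -/
def vnormA (A : H →L[ℂ] H) (x : H) : ℝ := Real.sqrt (innA A x x).re

/-- The `A`-operator seminorm `‖T‖_A = sup {‖T x‖_A : ‖x‖_A = 1}`. -/
def opnormA (A T : H →L[ℂ] H) : ℝ :=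
  sSup {r : ℝ | ∃ x : H, vnormA A x = 1 ∧ r = vnormA A (T x)}

/-- The `A`-numerical radius `w_A(T) = sup {|⟨T x, x⟩_A| : ‖x‖_A = 1}`. -/
def wA (A T : H →L[ℂ] H) : ℝ :=
  sSup {r : ℝ | ∃ x : H, vnormA A x = 1 ∧ r = ‖innA A (T x) x‖}

/-- The `A`-numerical range `W_A(T) = {⟨T x, x⟩_A : ‖x‖_A = 1}`. -/
def WA (A T : H →L[ℂ] H) : Set ℂ :=
  {z : ℂ | ∃ x : H, vnormA A x = 1 ∧ z = innA A (T x) x}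

/-- `Re_A(T) = (T + T♯)/2`, given an `A`-adjoint `Ts` of `T`. -/
def ReA (T Ts : H →L[ℂ] H) : H →L[ℂ] H := (2 : ℂ)⁻¹ • (T + Ts)

/-- `Im_A(T) = (T - T♯)/(2i)`, given an `A`-adjoint `Ts` of `T`. -/
def ImA (T Ts : H →L[ℂ] H) : H →L[ℂ] H := (2 * Complex.I)⁻¹ • (T - Ts)

/-- `Ts` is an `A`-adjoint of `T`, i.e. `A ∘ Ts = T* ∘ A`. -/
def IsAAdjoint (A T Ts : H →L[ℂ] H) : Prop :=
  A.comp Ts = (ContinuousLinearMap.adjoint T).comp A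

section Seminorm

variable {E : Type*} [NormedAddCommGroup E] [InnerProductSpace ℂ E] {A : E →L[ℂ] E}

-- Makes Mathlib's Cauchy–Schwarz for pre-inner products available for `⟨·, ·⟩_A`.
@[reducible]
def innACore (hA : A.IsPositive) : PreInnerProductSpace.Core ℂ E where
  inner := innA A
  conj_inner_symm x y := by simp [innA, hA.inner_left_eq_inner_right]
  re_inner_nonneg := hA.re_inner_nonneg_left
  add_left x y z := by simp [innA]
  smul_left x y r := by simp [innA, mul_comm]

lemma innA_add_left (x y z : E) : innA A (x + y) z = innA A x z + innA A y z := by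
  simp [innA]

lemma innA_add_right (x y z : E) : innA A x (y + z) = innA A x y + innA A x z := by
  simp [innA]

lemma innA_sub_left (x y z : E) : innA A (x - y) z = innA A x z - innA A y z := by
  simp [innA]

lemma innA_sub_right (x y z : E) : innA A x (y - z) = innA A x y - innA A x z := by
  simp [innA]

lemma innA_smul_left (c : ℂ) (x y : E) : innA A (c • x) y = starRingEnd ℂ c * innA A x y := by
  simp [innA, mul_comm]

lemma innA_smul_right (c : ℂ) (x y : E) : innA A x (c • y) = c * innA A x y := by
  simp [innA]

lemma conj_innA (hA : A.IsPositive) (x y : E) : starRingEnd ℂ (innA A x y) = innA A y x :=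
  (innACore hA).conj_inner_symm y x

lemma vnormA_nonneg (x : E) : 0 ≤ vnormA A x := Real.sqrt_nonneg _

lemma sq_vnormA (hA : A.IsPositive) (x : E) : vnormA A x ^ 2 = (innA A x x).re :=
  Real.sq_sqrt (hA.re_inner_nonneg_left x)

lemma norm_innA_le (hA : A.IsPositive) (x y : E) : ‖innA A x y‖ ≤ vnormA A x * vnormA A y :=
  @InnerProductSpace.Core.norm_inner_le_norm ℂ E _ _ _ (innACore hA) x y

lemma vnormA_smul (c : ℂ) (x : E) : vnormA A (c • x) = ‖c‖ * vnormA A x := by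
  rw [vnormA, vnormA, innA_smul_left, innA_smul_right, ← mul_assoc, Complex.conj_mul',
    ← Complex.ofReal_pow, Complex.re_ofReal_mul, Real.sqrt_mul (sq_nonneg _),
    Real.sqrt_sq (norm_nonneg c)]

lemma vnormA_add_sq_add_vnormA_sub_sq (hA : A.IsPositive) (x y : E) :
    vnormA A (x + y) ^ 2 + vnormA A (x - y) ^ 2 = 2 * (vnormA A x ^ 2 + vnormA A y ^ 2) := by
  simp only [sq_vnormA hA, innA_add_left, innA_add_right, innA_sub_left, innA_sub_right,
    Complex.add_re, Complex.sub_re]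
  ring

lemma vnormA_le_sqrt_norm_mul_norm (x : E) : vnormA A x ≤ √‖A‖ * ‖x‖ := by
  rw [← Real.sqrt_sq (norm_nonneg x), ← Real.sqrt_mul (norm_nonneg A)]
  refine Real.sqrt_le_sqrt ((Complex.re_le_norm _).trans ?_)
  calc ‖innA A x x‖ ≤ ‖A x‖ * ‖x‖ := norm_inner_le_norm _ _
    _ ≤ ‖A‖ * ‖x‖ * ‖x‖ := by gcongr; exact A.le_opNorm x
    _ = ‖A‖ * ‖x‖ ^ 2 := by ring

lemma opnormA_nonneg (T : E →L[ℂ] E) : 0 ≤ opnormA A T :=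
  Real.sSup_nonneg (by rintro r ⟨x, -, rfl⟩; exact vnormA_nonneg _)

lemma wA_nonneg (T : E →L[ℂ] E) : 0 ≤ wA A T :=
  Real.sSup_nonneg (by rintro r ⟨x, -, rfl⟩; exact norm_nonneg _)

lemma opnormA_le {T : E →L[ℂ] E} {c : ℝ} (hc : 0 ≤ c)
    (h : ∀ x, vnormA A x = 1 → vnormA A (T x) ≤ c) : opnormA A T ≤ c :=
  Real.sSup_le (by rintro r ⟨x, hx, rfl⟩; exact h x hx) hc

lemma wA_le {T : E →L[ℂ] E} {c : ℝ} (hc : 0 ≤ c)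
    (h : ∀ x, vnormA A x = 1 → ‖innA A (T x) x‖ ≤ c) : wA A T ≤ c :=
  Real.sSup_le (by rintro r ⟨x, hx, rfl⟩; exact h x hx) hc

lemma le_sSup_unit_mul_pow {f : E → ℝ} {k : ℕ} (hk : k ≠ 0)
    (hf : ∀ (c : ℂ) x, f (c • x) = ‖c‖ ^ k * f x)
    (hbdd : BddAbove {r | ∃ x, vnormA A x = 1 ∧ r = f x})
    (hnull : ∀ x, vnormA A x = 0 → f x ≤ 0) (x : E) :
    f x ≤ sSup {r | ∃ x, vnormA A x = 1 ∧ r = f x} * vnormA A x ^ k := by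
  rcases (vnormA_nonneg x).eq_or_lt with hx | hx
  · rw [← hx, zero_pow hk, mul_zero]
    exact hnull x hx.symm
  · set u : E := ((vnormA A x)⁻¹ : ℂ) • x
    have hu : vnormA A u = 1 := by
      rw [vnormA_smul, norm_inv, Complex.norm_real, Real.norm_of_nonneg hx.le,
        inv_mul_cancel₀ hx.ne']
    have hxu : x = (vnormA A x : ℂ) • u := by
      rw [smul_smul, mul_inv_cancel₀ (by exact_mod_cast hx.ne'), one_smul]
    calc f x = vnormA A x ^ k * f u := by
          conv_lhs => rw [hxu]
          rw [hf, Complex.norm_real, Real.norm_of_nonneg hx.le]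
      _ ≤ vnormA A x ^ k * sSup {r | ∃ x, vnormA A x = 1 ∧ r = f x} := by
          gcongr
          exact le_csSup hbdd ⟨u, hu, rfl⟩
      _ = _ := mul_comm _ _

lemma reA_add_imA (T Ts : E →L[ℂ] E) :
    ReA T Ts + ImA T Ts = ((1 - I) / 2) • T + starRingEnd ℂ ((1 - I) / 2) • Ts := by
  simp only [ReA, ImA, map_div₀, map_sub, map_one, Complex.conj_I, map_ofNat, smul_add, smul_sub]
  match_scalars <;> field_simp <;> ring_nf <;> rw [Complex.I_sq] <;> ring

lemma reA_sub_imA (T Ts : E →L[ℂ] E) :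
    ReA T Ts - ImA T Ts = ((1 + I) / 2) • T + starRingEnd ℂ ((1 + I) / 2) • Ts := by
  simp only [ReA, ImA, map_div₀, map_add, map_one, Complex.conj_I, map_ofNat, smul_add, smul_sub]
  match_scalars <;> field_simp <;> ring_nf <;> rw [Complex.I_sq] <;> ring

lemma reA_add_I_smul_imA (T Ts : E →L[ℂ] E) :
    ReA T Ts + I • ImA T Ts = T := by
  simp only [ReA, ImA, smul_smul, smul_add, smul_sub]
  match_scalars <;> field_simp <;> ring

lemma reA_sub_I_smul_imA (T Ts : E →L[ℂ] E) :
    ReA T Ts - I • ImA T Ts = Ts := by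
  simp only [ReA, ImA, smul_smul, smul_add, smul_sub]
  match_scalars <;> field_simp <;> ring

lemma sq_vnormA_add_sq_vnormA_eq (hA : A.IsPositive) (T Ts : E →L[ℂ] E) (x : E) :
    vnormA A (T x) ^ 2 + vnormA A (Ts x) ^ 2 =
      vnormA A ((ReA T Ts + ImA T Ts) x) ^ 2 + vnormA A ((ReA T Ts - ImA T Ts) x) ^ 2 := by
  have hT : (ReA T Ts + I • ImA T Ts) x = T x := by rw [reA_add_I_smul_imA]
  have hTs : (ReA T Ts - I • ImA T Ts) x = Ts x := by rw [reA_sub_I_smul_imA]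
  simp only [add_apply, sub_apply, smul_apply] at hT hTs ⊢
  rw [← hT, ← hTs, vnormA_add_sq_add_vnormA_sub_sq hA, vnormA_add_sq_add_vnormA_sub_sq hA,
    vnormA_smul, Complex.norm_I, one_mul]

end Seminorm

lemma two_mul_norm_one_sub_I_div_two : 2 * ‖(1 - I) / 2‖ = √2 := by
  rw [norm_div, Complex.norm_def, Complex.normSq_apply]
  norm_num
  ring

lemma two_mul_norm_one_add_I_div_two : 2 * ‖(1 + I) / 2‖ = √2 := by
  rw [norm_div, Complex.norm_def, Complex.normSq_apply]
  norm_num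
  ring

lemma le_of_forall_pow_two_pow_le_mul {a b C : ℝ} (hb : 0 ≤ b)
    (h : ∀ n : ℕ, a ^ 2 ^ n ≤ C * b ^ 2 ^ n) : a ≤ b := by
  by_contra! hba
  rcases hb.eq_or_lt with rfl | hb
  · have := h 0
    norm_num at this
    linarith
  · have hab : 1 < a / b := (one_lt_div hb).2 hba
    obtain ⟨n, hn⟩ := pow_unbounded_of_one_lt C hab
    have hC : (a / b) ^ 2 ^ n ≤ C := by
      rw [div_pow, div_le_iff₀ (by positivity)]
      exact h n
    have := pow_le_pow_right₀ hab.le (Nat.lt_two_pow_self (n := n)).le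
    linarith

lemma add_le_two_mul_sqrt_two_mul_sqrt {a b p q w : ℝ} (hp0 : 0 ≤ p) (hq0 : 0 ≤ q)
    (hp : p ≤ √2 * w) (hq : q ≤ √2 * w) (h : a ^ 2 + b ^ 2 ≤ p ^ 2 + q ^ 2) :
    a + b ≤ 2 * √2 * √(w ^ 2 - |p ^ 2 - q ^ 2| / 4) := by
  have hsq : (√2 * w) ^ 2 = 2 * w ^ 2 := by rw [mul_pow, Real.sq_sqrt zero_le_two]
  have hp2 : p ^ 2 ≤ 2 * w ^ 2 := hsq ▸ pow_le_pow_left₀ hp0 hp 2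
  have hq2 : q ^ 2 ≤ 2 * w ^ 2 := hsq ▸ pow_le_pow_left₀ hq0 hq 2
  have hpq : p ^ 2 + q ^ 2 + |p ^ 2 - q ^ 2| ≤ 4 * w ^ 2 := by
    rcases abs_cases (p ^ 2 - q ^ 2) with ⟨habs, -⟩ | ⟨habs, -⟩ <;> rw [habs] <;> linarith
  have h8 : 2 * √2 * √(w ^ 2 - |p ^ 2 - q ^ 2| / 4) =
      √(8 * (w ^ 2 - |p ^ 2 - q ^ 2| / 4)) := by
    rw [show (8 : ℝ) = 2 ^ 2 * 2 by norm_num, Real.sqrt_mul (by positivity),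
      Real.sqrt_mul (by positivity), Real.sqrt_sq zero_le_two]
  rw [h8]
  apply Real.le_sqrt_of_sq_le
  nlinarith [sq_nonneg (a - b)]

namespace IsAAdjoint

variable {A T Ts S Ss R P : H →L[ℂ] H}

lemma symm (hA : A.IsPositive) (hT : IsAAdjoint A T Ts) : IsAAdjoint A Ts T := by
  have := congrArg adjoint hT
  rw [adjoint_comp, adjoint_comp, adjoint_adjoint, hA.isSelfAdjoint.adjoint_eq] at this
  exact this.symm

lemma innA_apply (hA : A.IsPositive) (hT : IsAAdjoint A T Ts) (x y : H) :
    innA A (T x) y = innA A x (Ts y) := by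
  have h : A (T x) = adjoint Ts (A x) := congrArg (fun F => F x) (hT.symm hA)
  rw [innA, innA, h, adjoint_inner_left]

lemma mul (hT : IsAAdjoint A T Ts) (hS : IsAAdjoint A S Ss) :
    IsAAdjoint A (T * S) (Ss * Ts) := by
  change A * Ts = adjoint T * A at hT
  change A * Ss = adjoint S * A at hS
  change A * (Ss * Ts) = adjoint (T * S) * A
  rw [← mul_assoc, hS, mul_assoc, hT, ← mul_assoc, ← star_eq_adjoint, ← star_eq_adjoint,
    ← star_eq_adjoint, star_mul]

lemma pow (hR : IsAAdjoint A R R) (n : ℕ) : IsAAdjoint A (R ^ n) (R ^ n) := by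
  induction n with
  | zero =>
    change A * 1 = adjoint 1 * A
    rw [← star_eq_adjoint, star_one, mul_one, one_mul]
  | succ n ih =>
    have := ih.mul hR
    rwa [← pow_succ, ← pow_succ'] at this

lemma smul_add_conj_smul (hA : A.IsPositive) (hT : IsAAdjoint A T Ts) (c : ℂ) :
    IsAAdjoint A (c • T + starRingEnd ℂ c • Ts) (c • T + starRingEnd ℂ c • Ts) := by
  have hT' := hT.symm hA
  unfold IsAAdjoint at *
  rw [map_add, map_smulₛₗ, map_smulₛₗ, Complex.conj_conj, comp_add, add_comp, comp_smul,
    comp_smul, smul_comp, smul_comp, hT, hT', add_comm]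

lemma innA_adjoint_apply_self (hA : A.IsPositive) (hT : IsAAdjoint A T Ts) (x : H) :
    innA A (Ts x) x = starRingEnd ℂ (innA A (T x) x) := by
  rw [(hT.symm hA).innA_apply hA, conj_innA hA]

lemma sq_vnormA_apply_le (hA : A.IsPositive) (hT : IsAAdjoint A T Ts) (x : H) :
    vnormA A (T x) ^ 2 ≤ vnormA A x * vnormA A (Ts (T x)) := by
  rw [sq_vnormA hA, hT.innA_apply hA]
  exact (Complex.re_le_norm _).trans (norm_innA_le hA _ _)

lemma vnormA_apply_eq_zero (hA : A.IsPositive) (hT : IsAAdjoint A T Ts) {x : H}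
    (hx : vnormA A x = 0) : vnormA A (T x) = 0 := by
  have := hT.sq_vnormA_apply_le hA x
  rw [hx, zero_mul] at this
  exact pow_eq_zero_iff two_ne_zero |>.mp (le_antisymm this (sq_nonneg _))

lemma vnormA_apply_pow_two_pow_le (hA : A.IsPositive) (hR : IsAAdjoint A R R) {x : H}
    (hx : vnormA A x = 1) (n : ℕ) : vnormA A (R x) ^ 2 ^ n ≤ vnormA A ((R ^ 2 ^ n) x) := by
  induction n with
  | zero => simp
  | succ n ih =>
    calc vnormA A (R x) ^ 2 ^ (n + 1) = (vnormA A (R x) ^ 2 ^ n) ^ 2 := by ring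
      _ ≤ vnormA A ((R ^ 2 ^ n) x) ^ 2 := pow_le_pow_left₀ (by simp [vnormA_nonneg]) ih 2
      _ ≤ vnormA A x * vnormA A ((R ^ 2 ^ n) ((R ^ 2 ^ n) x)) :=
          (hR.pow (2 ^ n)).sq_vnormA_apply_le hA x
      _ = vnormA A ((R ^ 2 ^ (n + 1)) x) := by rw [hx, one_mul, pow_succ, pow_mul, sq]; rfl

lemma vnormA_apply_le_norm (hA : A.IsPositive) (hR : IsAAdjoint A R R) {x : H}
    (hx : vnormA A x = 1) : vnormA A (R x) ≤ ‖R‖ := by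
  refine le_of_forall_pow_two_pow_le_mul (C := √‖A‖ * ‖x‖) (norm_nonneg R) fun n => ?_
  calc vnormA A (R x) ^ 2 ^ n ≤ vnormA A ((R ^ 2 ^ n) x) := hR.vnormA_apply_pow_two_pow_le hA hx n
    _ ≤ √‖A‖ * ‖(R ^ 2 ^ n) x‖ := vnormA_le_sqrt_norm_mul_norm _
    _ ≤ √‖A‖ * (‖R‖ ^ 2 ^ n * ‖x‖) := by
        gcongr
        exact ((R ^ 2 ^ n).le_opNorm x).trans (by gcongr; exact norm_pow_le' R (by positivity))
    _ = √‖A‖ * ‖x‖ * ‖R‖ ^ 2 ^ n := by ring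

lemma bddAbove_vnormA_apply (hA : A.IsPositive) (hT : IsAAdjoint A T Ts) :
    BddAbove {r | ∃ x, vnormA A x = 1 ∧ r = vnormA A (T x)} := by
  refine ⟨√‖Ts * T‖, ?_⟩
  rintro r ⟨x, hx, rfl⟩
  rw [Real.le_sqrt (vnormA_nonneg _) (norm_nonneg _)]
  calc vnormA A (T x) ^ 2 ≤ vnormA A x * vnormA A ((Ts * T) x) := hT.sq_vnormA_apply_le hA x
    _ ≤ ‖Ts * T‖ := by
        rw [hx, one_mul]
        exact ((hT.symm hA).mul hT).vnormA_apply_le_norm hA hx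

lemma vnormA_apply_le (hA : A.IsPositive) (hT : IsAAdjoint A T Ts) (x : H) :
    vnormA A (T x) ≤ opnormA A T * vnormA A x := by
  have h := le_sSup_unit_mul_pow (f := fun x => vnormA A (T x)) one_ne_zero
    (fun c x => by simp [vnormA_smul]) (hT.bddAbove_vnormA_apply hA)
    (fun x hx => (hT.vnormA_apply_eq_zero hA hx).le) x
  rwa [pow_one] at h

lemma norm_innA_apply_self_le (hA : A.IsPositive) (hT : IsAAdjoint A T Ts) (x : H) :
    ‖innA A (T x) x‖ ≤ wA A T * vnormA A x ^ 2 := by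
  have hCS : ∀ x, ‖innA A (T x) x‖ ≤ vnormA A (T x) * vnormA A x :=
    fun x => norm_innA_le hA _ _
  refine le_sSup_unit_mul_pow (f := fun x => ‖innA A (T x) x‖) two_ne_zero
    (fun c x => by simp [innA_smul_left, innA_smul_right]; ring) ?_ ?_ x
  · obtain ⟨C, hC⟩ := hT.bddAbove_vnormA_apply hA
    refine ⟨C, ?_⟩
    rintro r ⟨y, hy, rfl⟩
    simpa [hy] using (hCS y).trans (by rw [hy, mul_one]; exact hC ⟨y, hy, rfl⟩)
  · intro y hy
    simpa [hy] using hCS y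

lemma vnormA_adjoint_apply_le (hA : A.IsPositive) (hT : IsAAdjoint A T Ts) (x : H) :
    vnormA A (Ts x) ≤ opnormA A T * vnormA A x := by
  have h : vnormA A (Ts x) * vnormA A (Ts x) ≤ opnormA A T * vnormA A x * vnormA A (Ts x) :=
    calc _ = vnormA A (Ts x) ^ 2 := (sq _).symm
      _ ≤ vnormA A x * vnormA A (T (Ts x)) := (hT.symm hA).sq_vnormA_apply_le hA x
      _ ≤ vnormA A x * (opnormA A T * vnormA A (Ts x)) :=
          mul_le_mul_of_nonneg_left (hT.vnormA_apply_le hA (Ts x)) (vnormA_nonneg x)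
      _ = opnormA A T * vnormA A x * vnormA A (Ts x) := by ring
  rcases (vnormA_nonneg (Ts x)).eq_or_lt with h0 | h0
  · rw [← h0]; exact mul_nonneg (opnormA_nonneg T) (vnormA_nonneg x)
  · exact le_of_mul_le_mul_right h h0

lemma four_mul_re_innA (hA : A.IsPositive) (hP : IsAAdjoint A P P) (y z : H) :
    4 * (innA A (P y) z).re =
      (innA A (P (y + z)) (y + z)).re - (innA A (P (y - z)) (y - z)).re := by
  have hzy : innA A (P z) y = starRingEnd ℂ (innA A (P y) z) := by
    rw [hP.innA_apply hA, conj_innA hA]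
  simp only [map_add, map_sub, innA_add_left, innA_add_right, innA_sub_left, innA_sub_right, hzy,
    Complex.add_re, Complex.sub_re, Complex.conj_re]
  ring

lemma re_innA_le_wA (hA : A.IsPositive) (hP : IsAAdjoint A P P) (y z : H) :
    (innA A (P y) z).re ≤ wA A P / 2 * (vnormA A y ^ 2 + vnormA A z ^ 2) := by
  have hre : ∀ u, (innA A (P u) u).re ≤ wA A P * vnormA A u ^ 2 ∧
      -(wA A P * vnormA A u ^ 2) ≤ (innA A (P u) u).re := fun u =>
    (abs_le.mp ((Complex.abs_re_le_norm _).trans (hP.norm_innA_apply_self_le hA u))).symm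
  have hpar : wA A P * vnormA A (y + z) ^ 2 + wA A P * vnormA A (y - z) ^ 2
      = 2 * wA A P * (vnormA A y ^ 2 + vnormA A z ^ 2) := by
    rw [← mul_add, vnormA_add_sq_add_vnormA_sub_sq hA]; ring
  linarith [hP.four_mul_re_innA hA y z, (hre (y + z)).1, (hre (y - z)).2]

lemma opnormA_le_wA (hA : A.IsPositive) (hP : IsAAdjoint A P P) : opnormA A P ≤ wA A P := by
  refine opnormA_le (wA_nonneg P) fun x hx => ?_
  rcases (vnormA_nonneg (P x)).eq_or_lt with h0 | h0
  · rw [← h0]; exact wA_nonneg P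
  · set z : H := ((vnormA A (P x))⁻¹ : ℂ) • P x
    have hz : vnormA A z = 1 := by
      rw [vnormA_smul, norm_inv, Complex.norm_real, Real.norm_of_nonneg h0.le,
        inv_mul_cancel₀ h0.ne']
    have hre : (innA A (P x) z).re = vnormA A (P x) := by
      rw [innA_smul_right, ← Complex.ofReal_inv, Complex.re_ofReal_mul, ← sq_vnormA hA]
      field_simp
    have := hP.re_innA_le_wA hA x z
    rw [hre, hz, hx] at this
    linarith

lemma wA_smul_add_conj_smul_le (hA : A.IsPositive) (hT : IsAAdjoint A T Ts) (c : ℂ) :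
    wA A (c • T + starRingEnd ℂ c • Ts) ≤ 2 * ‖c‖ * wA A T := by
  refine wA_le (by positivity [wA_nonneg (A := A) T]) fun x hx => ?_
  have hw : ‖innA A (T x) x‖ ≤ wA A T := by
    simpa [hx] using hT.norm_innA_apply_self_le hA x
  rw [add_apply, smul_apply, smul_apply, innA_add_left, innA_smul_left, innA_smul_left,
    Complex.conj_conj, hT.innA_adjoint_apply_self hA]
  calc _ ≤ ‖starRingEnd ℂ c * innA A (T x) x‖ + ‖c * starRingEnd ℂ (innA A (T x) x)‖ :=
        norm_add_le _ _
    _ ≤ 2 * ‖c‖ * wA A T := by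
        simp only [norm_mul, Complex.norm_conj]
        nlinarith [norm_nonneg c]

lemma reA_add_imA_self (hA : A.IsPositive) (hT : IsAAdjoint A T Ts) :
    IsAAdjoint A (ReA T Ts + ImA T Ts) (ReA T Ts + ImA T Ts) :=
  reA_add_imA T Ts ▸ hT.smul_add_conj_smul hA _

lemma reA_sub_imA_self (hA : A.IsPositive) (hT : IsAAdjoint A T Ts) :
    IsAAdjoint A (ReA T Ts - ImA T Ts) (ReA T Ts - ImA T Ts) :=
  reA_sub_imA T Ts ▸ hT.smul_add_conj_smul hA _

lemma opnormA_smul_add_conj_smul_le (hA : A.IsPositive) (hT : IsAAdjoint A T Ts) (c : ℂ) :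
    opnormA A (c • T + starRingEnd ℂ c • Ts) ≤ 2 * ‖c‖ * wA A T :=
  ((hT.smul_add_conj_smul hA c).opnormA_le_wA hA).trans (hT.wA_smul_add_conj_smul_le hA c)

lemma vnormA_apply_add_vnormA_adjoint_apply_le (hA : A.IsPositive) (hT : IsAAdjoint A T Ts)
    {x : H} (hx : vnormA A x = 1) :
    vnormA A (T x) + vnormA A (Ts x) ≤ 2 * √2 * √(wA A T ^ 2 -
      |opnormA A (ReA T Ts + ImA T Ts) ^ 2 - opnormA A (ReA T Ts - ImA T Ts) ^ 2| / 4) := by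
  have hP := hT.opnormA_smul_add_conj_smul_le hA ((1 - I) / 2)
  have hQ := hT.opnormA_smul_add_conj_smul_le hA ((1 + I) / 2)
  rw [← reA_add_imA, two_mul_norm_one_sub_I_div_two] at hP
  rw [← reA_sub_imA, two_mul_norm_one_add_I_div_two] at hQ
  refine add_le_two_mul_sqrt_two_mul_sqrt (opnormA_nonneg _) (opnormA_nonneg _) hP hQ ?_
  rw [sq_vnormA_add_sq_vnormA_eq hA]
  have hPx := (hT.reA_add_imA_self hA).vnormA_apply_le hA x
  have hQx := (hT.reA_sub_imA_self hA).vnormA_apply_le hA x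
  rw [hx, mul_one] at hPx hQx
  gcongr <;> exact vnormA_nonneg _

lemma norm_innA_comp_add_le (hA : A.IsPositive) (hT : IsAAdjoint A T Ts) (hS : IsAAdjoint A S Ss)
    {x : H} (hx : vnormA A x = 1) :
    ‖innA A (T (S x)) x‖ + ‖innA A (S (T x)) x‖ ≤ 2 * √2 * opnormA A S * √(wA A T ^ 2 -
      |opnormA A (ReA T Ts + ImA T Ts) ^ 2 - opnormA A (ReA T Ts - ImA T Ts) ^ 2| / 4) := by
  have hSx : vnormA A (S x) ≤ opnormA A S := by simpa [hx] using hS.vnormA_apply_le hA x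
  have hSsx : vnormA A (Ss x) ≤ opnormA A S := by
    simpa [hx] using hS.vnormA_adjoint_apply_le hA x
  rw [hT.innA_apply hA (S x), hS.innA_apply hA (T x)]
  calc _ ≤ vnormA A (S x) * vnormA A (Ts x) + vnormA A (T x) * vnormA A (Ss x) :=
        add_le_add (norm_innA_le hA _ _) (norm_innA_le hA _ _)
    _ ≤ opnormA A S * vnormA A (Ts x) + vnormA A (T x) * opnormA A S :=
        add_le_add (mul_le_mul_of_nonneg_right hSx (vnormA_nonneg _))
          (mul_le_mul_of_nonneg_left hSsx (vnormA_nonneg _))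
    _ = opnormA A S * (vnormA A (T x) + vnormA A (Ts x)) := by ring
    _ ≤ _ := by
        rw [mul_comm (2 * √2) (opnormA A S), mul_assoc]
        exact mul_le_mul_of_nonneg_left (hT.vnormA_apply_add_vnormA_adjoint_apply_le hA hx)
          (opnormA_nonneg S)

end IsAAdjoint

theorem stmt17 (A T Ts S Ss : H →L[ℂ] H) (hA : A.IsPositive)
    (hT : IsAAdjoint A T Ts) (hS : IsAAdjoint A S Ss) :
    wA A (T.comp S + S.comp T) ≤
        2 * Real.sqrt 2 * opnormA A S *
          Real.sqrt (wA A T ^ 2 -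
            |opnormA A (ReA T Ts + ImA T Ts) ^ 2 - opnormA A (ReA T Ts - ImA T Ts) ^ 2| / 4) ∧
      wA A (T.comp S - S.comp T) ≤
        2 * Real.sqrt 2 * opnormA A S *
          Real.sqrt (wA A T ^ 2 -
            |opnormA A (ReA T Ts + ImA T Ts) ^ 2 - opnormA A (ReA T Ts - ImA T Ts) ^ 2| / 4) := by
  refine ⟨wA_le ?_ fun x hx => ?_, wA_le ?_ fun x hx => ?_⟩
  any_goals exact mul_nonneg (mul_nonneg (by positivity) (opnormA_nonneg S)) (Real.sqrt_nonneg _)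
  · rw [add_apply, innA_add_left]
    exact (norm_add_le _ _).trans (hT.norm_innA_comp_add_le hA hS hx)
  · rw [sub_apply, innA_sub_left]
    exact (norm_sub_le _ _).trans (hT.norm_innA_comp_add_le hA hS hx)
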